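/- arXiv:1704.03926 — 2 statements merged into one kernel-verified Lean document; each statement's English description precedes it below -/
import Mathlib

section
/- Under the assumptions of the preceding statement, the one-step lookahead policy π_V(s) = argmax_{a_i} q_t(s, a_i) selects the same arm as the index policy π_I(s) = argmax_{a_i} z_t(s^i, a_i) at every state s. -/
/-- Under a linearly separable value function whose components satisfy
`υ i x = E[υ i (S')] + r i x − z i x`, the one-step lookahead policy
(arms maximizing `q s ·`) coincides with the index policy
(arms maximizing `z · (s ·)`) at every state: the argmax sets are equal. -/
theorem lookahead_policy_eq_index_policy {ι : Type*} [Fintype ι] [DecidableEq ι]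
    {σ : ι → Type*}
    (p : ∀ i, σ i → ℝ) (s1 s0 : ∀ i, σ i → σ i)
    (r z υ : ∀ i, σ i → ℝ)
    (hrec : ∀ i x, υ i x =
      (p i x * υ i (s1 i x) + (1 - p i x) * υ i (s0 i x)) + r i x - z i x)
    (v : (∀ i, σ i) → ℝ) (hv : ∀ s, v s = ∑ i, υ i (s i))
    (q : (∀ i, σ i) → ι → ℝ)
    (hq : ∀ s i, q s i = r i (s i)
      + p i (s i) * v (Function.update s i (s1 i (s i)))
      + (1 - p i (s i)) * v (Function.update s i (s0 i (s i)))) :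
    ∀ s : ∀ i, σ i,
      {i | ∀ j, q s j ≤ q s i} = {i | ∀ j, z j (s j) ≤ z i (s i)} := by
  intro s
  have hsum : ∀ (i : ι) (x : σ i),
      (∑ j, υ j (Function.update s i x j)) = υ i x + ∑ j ∈ Finset.univ.erase i, υ j (s j) := by
    intro i x
    rw [← Finset.add_sum_erase _ _ (Finset.mem_univ i)]
    congr 1
    · simp
    · exact Finset.sum_congr rfl fun j hj => by
        rw [Function.update_of_ne (Finset.ne_of_mem_erase hj)]
  have hkey : ∀ i, q s i = v s + z i (s i) := by
    intro i
    have hvs : v s = υ i (s i) + ∑ j ∈ Finset.univ.erase i, υ j (s j) := by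
      rw [hv, ← Finset.add_sum_erase _ _ (Finset.mem_univ i)]
    rw [hq, hv, hv, hsum, hsum, hvs]
    have := hrec i (s i)
    nlinarith [this]
  ext i
  simp only [Set.mem_setOf_eq, hkey]
  constructor <;> intro h j <;> have := h j <;> linarith
end

section
/- For any policy π computed by one-step lookahead with respect to value functions v_t (i.e., π(s) ∈ argmax_a q_t(s,a) where q_t(s,a) = r(s,a) + E[v_{t+1}(S_{t+1}(s,a))]), the regret satisfies regret(π, T, μ) ≤ Σ_{t=1}^T E[φ_t(μ, S_t, π(S_t))] − Σ_{t=1}^T E[φ_t(μ, S_t, a_{i*})], where φ_t(μ, s, a_i) = q_t(s, a_i) − (μ_i + v_{t+1}(s)) and i* = argmax_i μ_i. -/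
open MeasureTheory

/-- Regret decomposition: for any policy `π` that is greedy with respect to the
one-step lookahead values `q`, the regret is bounded by the difference of the sums
of expected residuals `φ t s a = q t s a − (μ a + v (t+1) s)` at the chosen arms
and at the optimal arm. -/
theorem regret_decomposition {Ω S A : Type*} [MeasurableSpace Ω]
    (ℙ : Measure Ω) [IsProbabilityMeasure ℙ]
    (T : ℕ) (St : ℕ → Ω → S) (π : ℕ → S → A)
    (q : ℕ → S → A → ℝ) (v : ℕ → S → ℝ) (μ : A → ℝ)
    (istar : A) (hstar : ∀ j, μ j ≤ μ istar)
    (hgreedy : ∀ t s a, q t s a ≤ q t s (π t s))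
    (φ : ℕ → S → A → ℝ)
    (hφ : ∀ t s a, φ t s a = q t s a - (μ a + v (t + 1) s))
    (hint1 : ∀ t, Integrable (fun ω => φ t (St t ω) (π t (St t ω))) ℙ)
    (hint2 : ∀ t, Integrable (fun ω => φ t (St t ω) istar) ℙ)
    (hint3 : ∀ t, Integrable (fun ω => μ (π t (St t ω))) ℙ) :
    ∑ t ∈ Finset.range T, (μ istar - ∫ ω, μ (π t (St t ω)) ∂ℙ) ≤
      ∑ t ∈ Finset.range T, ∫ ω, φ t (St t ω) (π t (St t ω)) ∂ℙ
      - ∑ t ∈ Finset.range T, ∫ ω, φ t (St t ω) istar ∂ℙ := by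
  rw [← Finset.sum_sub_distrib]
  refine Finset.sum_le_sum fun t _ => ?_
  rw [← integral_sub (hint1 t) (hint2 t)]
  have hconst : Integrable (fun _ : Ω => μ istar) ℙ := integrable_const _
  have h1 : μ istar - ∫ ω, μ (π t (St t ω)) ∂ℙ
      = ∫ ω, (μ istar - μ (π t (St t ω))) ∂ℙ := by
    simp [integral_sub hconst (hint3 t)]
  rw [h1]
  refine integral_mono (hconst.sub (hint3 t)) ((hint1 t).sub (hint2 t)) fun ω => ?_
  simp only [hφ]
  have := hgreedy t (St t ω) istar
  linarith
end
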